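/- Suppose for a distribution P, optimal f* and every f in a model with losses in [0,a], and for η = v(ε) ≤ b, the η-pseudoprobability convexity condition up to ε holds for the two-point mixture Π = ½δ_{f*} + ½δ_f: E_{Z~P}[ℓ_{f*}(Z)] ≤ E_{Z~P}[-(1/η) log(½e^{-ηℓ_{f*}(Z)} + ½e^{-ηℓ_f(Z)})] + ε. Then Var_{Z~P}(ℓ_f(Z) - ℓ_{f*}(Z)) ≤ (2/(κ(-2ab)·η))·(E_{Z~P}[ℓ_f(Z) - ℓ_{f*}(Z)] + 2ε). -/

import Mathlib

open MeasureTheory Real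

/-!
Write `X = ℓ_f - ℓ_{f*}` and let `Y = η (ℓ_{f̄} - ℓ_{f*})` with `f̄ ~ ½δ_{f*} + ½δ_f`, a
two-point variable with mean `ηX/2` and variance `η²X²/4`. The mix loss equals
`ℓ_{f*} + X/2 - η⁻¹ log cosh (ηX/2)`, and `log cosh (ηX/2) = log E e^{-Y} + E Y`. Comparing
derivatives (`tanh s ≥ (1 - e^{-2s})/2`) gives `log cosh s ≥ κ(-2|s|) s²`, and κ is monotone,
so `|ηX| ≤ ab` yields `log cosh (ηX/2) ≥ κ(-2ab) η²X²/4`. Taking expectations and inserting the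
PPC condition gives `κ(-2ab) η E[X²]/4 ≤ E[X]/2 + ε`, and the variance is at most `E[X²]`.
-/

-- `kappa 0 = 0` here rather than the paper's `1/2`; only negative arguments matter below.
noncomputable def kappa (x : ℝ) : ℝ := (exp x - x - 1) / x ^ 2

lemma kappa_neg (c : ℝ) : kappa (-c) = (exp (-c) + c - 1) / c ^ 2 := by
  rw [kappa, sub_neg_eq_add, neg_sq]

lemma kappa_pos {x : ℝ} (hx : x ≠ 0) : 0 < kappa x :=
  div_pos (by linarith [add_one_lt_exp hx]) (by positivity)

lemma hasDerivAt_kappa {x : ℝ} (hx : x ≠ 0) :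
    HasDerivAt kappa (x * ((x - 2) * exp x + x + 2) / (x ^ 2) ^ 2) x := by
  have hnum : HasDerivAt (fun x => exp x - x - 1) (exp x - 1) x :=
    ((hasDerivAt_exp x).sub (hasDerivAt_id' x)).sub_const 1
  exact (hnum.div (hasDerivAt_pow 2 x) (pow_ne_zero 2 hx)).congr_deriv (by push_cast; ring)

lemma monotone_sub_two_mul_exp_add : Monotone fun x : ℝ => (x - 2) * exp x + x + 2 := by
  refine monotone_of_hasDerivAt_nonneg (f' := fun x => (x - 1) * exp x + 1)
    (fun x => ?_) fun x => ?_
  · exact ((((hasDerivAt_id' x).sub_const 2).mul (hasDerivAt_exp x)).add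
      (hasDerivAt_id' x)).add_const 2 |>.congr_deriv (by ring)
  · have h1 := add_one_le_exp (-x)
    have h2 : exp (-x) * exp x = 1 := by rw [← exp_add, neg_add_cancel, exp_zero]
    show 0 ≤ (x - 1) * exp x + 1
    nlinarith [exp_pos x]

lemma kappa_monotoneOn : MonotoneOn kappa (Set.Iio 0) := by
  refine monotoneOn_of_hasDerivWithinAt_nonneg (convex_Iio 0)
    (f' := fun x => x * ((x - 2) * exp x + x + 2) / (x ^ 2) ^ 2)
    (fun x hx => (hasDerivAt_kappa (ne_of_lt hx)).continuousAt.continuousWithinAt)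
    (fun x hx => ?_) fun x hx => ?_
  · rw [interior_Iio] at hx
    exact (hasDerivAt_kappa (ne_of_lt hx)).hasDerivWithinAt
  · rw [interior_Iio] at hx
    have hψ : (x - 2) * exp x + x + 2 ≤ 0 := by
      simpa using monotone_sub_two_mul_exp_add (le_of_lt hx)
    have := mul_nonneg_of_nonpos_of_nonpos hx.le hψ
    positivity

lemma monotone_log_cosh_sub :
    Monotone fun s : ℝ => log (cosh s) - (exp (-(2 * s)) + 2 * s - 1) / 4 := by
  refine monotone_of_hasDerivAt_nonneg
    (f' := fun s => sinh s / cosh s - (1 - exp (-(2 * s))) / 2) (fun s => ?_) fun s => ?_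
  · have hexp : HasDerivAt (fun s : ℝ => exp (-(2 * s))) (-(2 * exp (-(2 * s)))) s :=
      ((hasDerivAt_exp _).comp s ((hasDerivAt_id' s).const_mul 2).neg).congr_deriv
        (by simp only [Pi.neg_apply]; ring)
    exact (((hasDerivAt_cosh s).log (cosh_pos s).ne').sub
      (((hexp.add ((hasDerivAt_id' s).const_mul 2)).sub_const 1).div_const 4)).congr_deriv
      (by ring)
  · show 0 ≤ sinh s / cosh s - (1 - exp (-(2 * s))) / 2
    rw [sub_nonneg, sinh_eq, cosh_eq, div_div_div_cancel_right₀ two_ne_zero]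
    have h1 : exp s * exp (-s) = 1 := by rw [← exp_add, add_neg_cancel, exp_zero]
    have h2 : exp (-(2 * s)) = exp (-s) ^ 2 := by rw [← exp_nat_mul]; ring_nf
    rw [h2, le_div_iff₀ (by positivity)]
    -- with `u = e^{-s}` this is `(1 - u²)² ≥ 0`
    nlinarith [exp_pos s, exp_pos (-s), sq_nonneg (1 - exp (-s) ^ 2)]

lemma kappa_neg_two_mul_mul_sq_le_log_cosh {s : ℝ} (hs : 0 ≤ s) :
    kappa (-(2 * s)) * s ^ 2 ≤ log (cosh s) := by
  rcases hs.eq_or_lt with rfl | hs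
  · simp
  have h := monotone_log_cosh_sub hs.le
  simp only [mul_zero, neg_zero, exp_zero, cosh_zero, log_one] at h
  rw [kappa_neg]
  field_simp
  linarith

lemma kappa_mul_sq_le_log_cosh {c s : ℝ} (hs : 2 * |s| ≤ c) :
    kappa (-c) * s ^ 2 ≤ log (cosh s) := by
  rcases eq_or_ne s 0 with rfl | hs0
  · simp
  have hpos : 0 < 2 * |s| := by positivity
  calc kappa (-c) * s ^ 2 ≤ kappa (-(2 * |s|)) * |s| ^ 2 := by
        rw [sq_abs]
        gcongr
        exact kappa_monotoneOn (by simp; linarith) (by simpa using hpos) (by linarith)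
    _ ≤ log (cosh |s|) := kappa_neg_two_mul_mul_sq_le_log_cosh (abs_nonneg s)
    _ = log (cosh s) := by rw [cosh_abs]

noncomputable def mixLoss (η x y : ℝ) : ℝ :=
  -(1 / η) * log (1 / 2 * exp (-η * x) + 1 / 2 * exp (-η * y))

lemma mixLoss_eq {η : ℝ} (hη : η ≠ 0) (x y : ℝ) :
    mixLoss η x y = (x + y) / 2 - log (cosh (η * (y - x) / 2)) / η := by
  have hhalf : 1 / 2 * exp (-η * x) + 1 / 2 * exp (-η * y)
      = exp (-η * (x + y) / 2) * cosh (η * (y - x) / 2) := by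
    rw [cosh_eq, mul_div_assoc', mul_add, ← exp_add, ← exp_add]
    ring_nf
  rw [mixLoss, hhalf, log_mul (exp_pos _).ne' (cosh_pos _).ne', log_exp]
  field_simp
  ring

lemma mixLoss_nonneg {η x y : ℝ} (hη : 0 ≤ η) (hx : 0 ≤ x) (hy : 0 ≤ y) :
    0 ≤ mixLoss η x y := by
  have hx' : exp (-η * x) ≤ 1 := exp_le_one_iff.2 (by nlinarith)
  have hy' : exp (-η * y) ≤ 1 := exp_le_one_iff.2 (by nlinarith)
  exact mul_nonneg_of_nonpos_of_nonpos (by simpa using hη)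
    (log_nonpos (by positivity) (by linarith))

lemma mixLoss_le {η c x y : ℝ} (hη : 0 < η) (h : |η * (y - x)| ≤ c) :
    mixLoss η x y ≤ x + (y - x) / 2 - kappa (-c) * η * (y - x) ^ 2 / 4 := by
  have hcosh := kappa_mul_sq_le_log_cosh (c := c) (s := η * (y - x) / 2)
    (by rw [abs_div, abs_two]; linarith)
  have hdiv : kappa (-c) * η * (y - x) ^ 2 / 4 ≤ log (cosh (η * (y - x) / 2)) / η := by
    rw [le_div_iff₀ hη]
    linarith
  rw [mixLoss_eq hη.ne']
  linarith

lemma integral_mixLoss_le {Ω : Type*} [MeasurableSpace Ω] {P : Measure Ω} [IsFiniteMeasure P]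
    {η c a : ℝ} {x y : Ω → ℝ} (hη : 0 < η) (hx : Measurable x) (hy : Measurable y)
    (hxa : ∀ z, x z ∈ Set.Icc 0 a) (hya : ∀ z, y z ∈ Set.Icc 0 a)
    (hc : ∀ z, |η * (y z - x z)| ≤ c) :
    ∫ z, mixLoss η (x z) (y z) ∂P ≤
      ∫ z, x z ∂P + (∫ z, (y z - x z) ∂P) / 2
        - kappa (-c) * η * (∫ z, (y z - x z) ^ 2 ∂P) / 4 := by
  have hIx : Integrable x P := .of_mem_Icc 0 a hx.aemeasurable (ae_of_all _ hxa)
  have hIyx : Integrable (fun z => y z - x z) P :=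
    (Integrable.of_mem_Icc 0 a hy.aemeasurable (ae_of_all _ hya)).sub hIx
  have hIyx2 : Integrable (fun z => (y z - x z) ^ 2) P :=
    .of_mem_Icc 0 (a ^ 2) ((hy.sub hx).pow_const 2).aemeasurable (ae_of_all _ fun z =>
      ⟨sq_nonneg _, by
        rw [← sq_abs]
        exact pow_le_pow_left₀ (abs_nonneg _) (abs_sub_le_of_nonneg_of_le (hya z).1 (hya z).2
          (hxa z).1 (hxa z).2) 2⟩)
  have hI₁ : Integrable (fun z => x z + (y z - x z) / 2) P := hIx.add (hIyx.div_const 2)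
  have hI₂ : Integrable (fun z => kappa (-c) * η * (y z - x z) ^ 2 / 4) P :=
    (hIyx2.const_mul _).div_const 4
  rw [← integral_const_mul, ← integral_div, ← integral_div,
    ← integral_add hIx (hIyx.div_const 2), ← integral_sub hI₁ hI₂]
  exact integral_mono_of_nonneg (ae_of_all _ fun z => mixLoss_nonneg hη.le (hxa z).1 (hya z).1)
    (hI₁.sub hI₂) (ae_of_all _ fun z => mixLoss_le hη (hc z))

theorem stmt11_general {Ω : Type*} [MeasurableSpace Ω] (P : Measure Ω) [IsProbabilityMeasure P]
    (Lf Lstar : Ω → ℝ) (a b η ε : ℝ) (ha : 0 < a)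
    (hmf : Measurable Lf) (hms : Measurable Lstar)
    (hrf : ∀ z, Lf z ∈ Set.Icc 0 a) (hrs : ∀ z, Lstar z ∈ Set.Icc 0 a)
    (hη : 0 < η) (hηb : η ≤ b)
    (hppc : ∫ z, Lstar z ∂P ≤
      (∫ z, -(1/η) * Real.log ((1/2) * Real.exp (-η * Lstar z)
        + (1/2) * Real.exp (-η * Lf z)) ∂P) + ε) :
    (∫ z, (Lf z - Lstar z)^2 ∂P) - (∫ z, (Lf z - Lstar z) ∂P)^2 ≤
      (2 / (((Real.exp (-(2*a*b)) + 2*a*b - 1) / (2*a*b)^2) * η)) *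
        ((∫ z, (Lf z - Lstar z) ∂P) + 2*ε) := by
  change _ ≤ ∫ z, mixLoss η (Lstar z) (Lf z) ∂P + ε at hppc
  have hc : 0 < 2 * a * b := by have := hη.trans_le hηb; positivity
  have hηX (z : Ω) : |η * (Lf z - Lstar z)| ≤ 2 * a * b := by
    have hX := abs_sub_le_of_nonneg_of_le (hrf z).1 (hrf z).2 (hrs z).1 (hrs z).2
    rw [abs_mul, abs_of_pos hη]
    nlinarith [abs_nonneg (Lf z - Lstar z)]
  have hmix := integral_mixLoss_le (P := P) hη hms hmf hrs hrf hηX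
  rw [← kappa_neg]
  have hκη : 0 < kappa (-(2 * a * b)) * η := mul_pos (kappa_pos (neg_ne_zero.2 hc.ne')) hη
  have hsq : ∫ z, (Lf z - Lstar z) ^ 2 ∂P ≤
      2 / (kappa (-(2 * a * b)) * η) * (∫ z, (Lf z - Lstar z) ∂P + 2 * ε) := by
    rw [div_mul_eq_mul_div, le_div_iff₀ hκη]
    linarith
  linarith [sq_nonneg (∫ z, (Lf z - Lstar z) ∂P)]

/-- Pseudoprobability convexity implies a Bernstein-type variance bound: if the
η-PPC condition up to ε holds for the two-point mixture `½δ_{f*} + ½δ_f`,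
then `Var(ℓ_f - ℓ_{f*}) ≤ (2/(κ(-2ab)·η))·(E[ℓ_f - ℓ_{f*}] + 2ε)`. -/
theorem stmt11 {Ω : Type*} [MeasurableSpace Ω] (P : Measure Ω) [IsProbabilityMeasure P]
    (Lf Lstar : Ω → ℝ) (a b η ε : ℝ) (ha : 0 < a) (hb : 0 < b)
    (hmf : Measurable Lf) (hms : Measurable Lstar)
    (hrf : ∀ z, Lf z ∈ Set.Icc 0 a) (hrs : ∀ z, Lstar z ∈ Set.Icc 0 a)
    (hη : 0 < η) (hηb : η ≤ b) (hε : 0 ≤ ε)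
    (hppc : ∫ z, Lstar z ∂P ≤
      (∫ z, -(1/η) * Real.log ((1/2) * Real.exp (-η * Lstar z)
        + (1/2) * Real.exp (-η * Lf z)) ∂P) + ε) :
    (∫ z, (Lf z - Lstar z)^2 ∂P) - (∫ z, (Lf z - Lstar z) ∂P)^2 ≤
      (2 / (((Real.exp (-(2*a*b)) + 2*a*b - 1) / (2*a*b)^2) * η)) *
        ((∫ z, (Lf z - Lstar z) ∂P) + 2*ε) :=
  stmt11_general P Lf Lstar a b η ε ha hmf hms hrf hrs hη hηb hppc
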